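/- Let R be a commutative ring decomposed as R = ⊕_{i=1}^N e_iR by a complete system of pairwise orthogonal idempotents e_i summing to 1, with each e_iR ≅ 𝔽_q. Let λ = ∑_i e_iλ_i be a unit with each λ_i ∈ 𝔽_q, and let C = ⊕_i e_iC_i be a linear code of length n over R with C_i ⊆ 𝔽_qⁿ. Then C is λ-constacyclic over R if and only if each C_i is λ_i-constacyclic over 𝔽_q. -/
import Mathlib


/-- Over `R ≅ 𝔽_q^N` (complete orthogonal idempotent decomposition), a code
`C = ⊕ eᵢCᵢ` is `λ`-constacyclic iff each component `Cᵢ` is `λᵢ`-constacyclic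
over `𝔽_q`. -/
theorem constacyclic_iff_components
    (F : Type*) [Field F] [Fintype F] (N n : ℕ) (hn : 0 < n)
    (lam : Fin N → F)
    (Ci : Fin N → Submodule F (Fin n → F))
    (C : Set (Fin n → (Fin N → F)))
    (hC : C = {c | ∀ i : Fin N, (fun j : Fin n => c j i) ∈ Ci i}) :
    (∀ c ∈ C,
        (fun j : Fin n => if j.val = 0 then lam * c ⟨n - 1, by omega⟩
          else c ⟨j.val - 1, by have := j.isLt; omega⟩) ∈ C)
      ↔ ∀ i : Fin N, ∀ a ∈ Ci i,
          (fun j : Fin n => if j.val = 0 then lam i * a ⟨n - 1, by omega⟩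
            else a ⟨j.val - 1, by have := j.isLt; omega⟩) ∈ Ci i := by
  subst hC
  constructor
  · intro h i a ha
    set c : Fin n → Fin N → F := fun j i' => if i' = i then a j else 0 with hc
    have hcC : c ∈ {c | ∀ i : Fin N, (fun j : Fin n => c j i) ∈ Ci i} := by
      intro i'
      by_cases hii : i' = i
      · subst hii; simpa [hc] using ha
      · have : (fun j : Fin n => c j i') = 0 := by funext j; simp [hc, hii]
        rw [this]; exact (Ci i').zero_mem
    have h2 := h c hcC i
    have heq : (fun j : Fin n => if j.val = 0 then lam i * a ⟨n - 1, by omega⟩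
            else a ⟨j.val - 1, by have := j.isLt; omega⟩)
        = (fun j : Fin n => (if j.val = 0 then lam * c ⟨n - 1, by omega⟩
          else c ⟨j.val - 1, by have := j.isLt; omega⟩) i) := by
      funext j
      by_cases hj : j.val = 0 <;> simp [hj, hc]
    rw [heq]
    exact h2
  · intro h c hcC i
    have h2 := h i (fun j => c j i) (hcC i)
    have heq : (fun j : Fin n => (if j.val = 0 then lam * c ⟨n - 1, by omega⟩
          else c ⟨j.val - 1, by have := j.isLt; omega⟩) i)
        = (fun j : Fin n => if j.val = 0 then lam i * c ⟨n - 1, by omega⟩ i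
            else c ⟨j.val - 1, by have := j.isLt; omega⟩ i) := by
      funext j
      by_cases hj : j.val = 0 <;> simp [hj]
    exact heq ▸ h2
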